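/- arXiv:math/0304256 — 2 statements merged into one kernel-verified Lean document; each statement's English description precedes it below -/
import Mathlib

section
/- Let T be a Jacobi flow along a unit-speed geodesic c and suppose the curvature satisfies ⟨R(u,c'(s))c'(s),u⟩ ≤ Δ(s) for unit u. Then ‖T(s)u‖ ≥ f_Δ(s)‖u‖ for all s on which f_Δ is positive, where f_Δ solves f'' + Δf = 0 with the initial conditions matching those of T (f(0)=0, f'(0)=1 in the conjugate-point case; f(0)=1, f'(0)=0 in the focal case with A=0). -/
/-!
Fix `u` and put `v t = T t u`, so `v'' = -R v`. Where `v ≠ 0`, Cauchy–Schwarz gives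
`‖v‖'' ≥ ⟪v, v''⟫ / ‖v‖ ≥ -Δ ‖v‖`, so by Sturm comparison with `f'' = -Δ f` the Wronskian
`‖v‖' f - ‖v‖ f'` is nondecreasing; it vanishes at `0⁺` under either set of initial conditions,
hence `‖v‖ / f` is nondecreasing with limit `‖u‖` at `0⁺`. This gives `‖v‖ ≥ ‖u‖ f` up to the
first zero of `v`, and by continuity also at that zero, which is impossible while `f > 0`.
-/

open scoped RealInnerProductSpace

open Filter Set Topology

theorem monotoneOn_of_forall_hasDerivAt_nonneg {S : Set ℝ} (hS : Convex ℝ S) {φ φ' : ℝ → ℝ}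
    (hφ : ∀ x ∈ S, HasDerivAt φ (φ' x) x) (hφ' : ∀ x ∈ S, 0 ≤ φ' x) : MonotoneOn φ S :=
  monotoneOn_of_hasDerivWithinAt_nonneg hS
    (fun x hx => (hφ x hx).continuousAt.continuousWithinAt)
    (fun x hx => (hφ x (interior_subset hx)).hasDerivWithinAt)
    (fun x hx => hφ' x (interior_subset hx))

theorem MonotoneOn.le_of_tendsto_nhdsGT {φ : ℝ → ℝ} {a b c : ℝ} (hφ : MonotoneOn φ (Ioc a b))
    (hlim : Tendsto φ (𝓝[>] a) (𝓝 c)) : ∀ t ∈ Ioc a b, c ≤ φ t := by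
  intro t ht
  refine le_of_tendsto hlim ?_
  filter_upwards [Ioo_mem_nhdsGT ht.1] with x hx
  exact hφ ⟨hx.1, hx.2.le.trans ht.2⟩ ht hx.2.le

section SturmComparison

variable {S : Set ℝ} {g g' f f' Δ : ℝ → ℝ}

theorem monotoneOn_wronskian_of_comparison (hS : Convex ℝ S)
    (hg : ∀ t ∈ S, HasDerivAt g (g' t) t)
    (hg' : ∀ t ∈ S, ∃ D, HasDerivAt g' D t ∧ -(Δ t * g t) ≤ D)
    (hf : ∀ t ∈ S, HasDerivAt f (f' t) t)
    (hf' : ∀ t ∈ S, HasDerivAt f' (-(Δ t * f t)) t)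
    (hfpos : ∀ t ∈ S, 0 < f t) :
    MonotoneOn (fun t => g' t * f t - g t * f' t) S := by
  choose! D hD hDΔ using hg'
  refine monotoneOn_of_forall_hasDerivAt_nonneg hS (φ' := fun t => f t * (D t + Δ t * g t))
    (fun t ht => ?_) fun t ht => mul_nonneg (hfpos t ht).le (by linarith [hDΔ t ht])
  exact (((hD t ht).mul (hf t ht)).sub ((hg t ht).mul (hf' t ht))).congr_deriv (by ring)

theorem monotoneOn_div_of_wronskian_nonneg (hS : Convex ℝ S)
    (hg : ∀ t ∈ S, HasDerivAt g (g' t) t) (hf : ∀ t ∈ S, HasDerivAt f (f' t) t)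
    (hfpos : ∀ t ∈ S, 0 < f t) (hW : ∀ t ∈ S, 0 ≤ g' t * f t - g t * f' t) :
    MonotoneOn (fun t => g t / f t) S :=
  monotoneOn_of_forall_hasDerivAt_nonneg hS (fun t ht => (hg t ht).div (hf t ht) (hfpos t ht).ne')
    fun t ht => div_nonneg (hW t ht) (sq_nonneg _)

theorem le_div_of_sturm_comparison {a b c : ℝ}
    (hg : ∀ t ∈ Ioc a b, HasDerivAt g (g' t) t)
    (hg' : ∀ t ∈ Ioc a b, ∃ D, HasDerivAt g' D t ∧ -(Δ t * g t) ≤ D)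
    (hf : ∀ t ∈ Ioc a b, HasDerivAt f (f' t) t)
    (hf' : ∀ t ∈ Ioc a b, HasDerivAt f' (-(Δ t * f t)) t)
    (hfpos : ∀ t ∈ Ioc a b, 0 < f t)
    (hW : Tendsto (fun t => g' t * f t - g t * f' t) (𝓝[>] a) (𝓝 0))
    (hq : Tendsto (fun t => g t / f t) (𝓝[>] a) (𝓝 c)) :
    ∀ t ∈ Ioc a b, c ≤ g t / f t :=
  have hW₀ := (monotoneOn_wronskian_of_comparison (convex_Ioc a b) hg hg' hf hf'
    hfpos).le_of_tendsto_nhdsGT hW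
  (monotoneOn_div_of_wronskian_nonneg (convex_Ioc a b) hg hf hfpos hW₀).le_of_tendsto_nhdsGT hq

end SturmComparison

theorem forall_ne_zero_of_le_while_ne_zero {g h : ℝ → ℝ} {a b : ℝ} (hg : ContinuousOn g (Ioc a b))
    (hh : ContinuousOn h (Ioc a b)) (hpos : ∀ t ∈ Ioc a b, 0 < h t)
    (hnear : ∀ᶠ t in 𝓝[>] a, g t ≠ 0)
    (hle : ∀ τ ∈ Ioc a b, (∀ t ∈ Ioc a τ, g t ≠ 0) → h τ ≤ g τ) :
    ∀ t ∈ Ioc a b, g t ≠ 0 := by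
  intro t₀ ht₀ hgt₀
  obtain ⟨δ, hδ, hgδ⟩ := (nhdsGT_basis a).eventually_iff.1 hnear
  set Z := Icc δ b ∩ g ⁻¹' {0}
  have hZ : IsClosed Z := (hg.mono (Icc_subset_Ioc_left hδ)).preimage_isClosed_of_isClosed
    isClosed_Icc isClosed_singleton
  have hZbdd : BddBelow Z := ⟨δ, fun x hx => hx.1.1⟩
  have ht₀Z : t₀ ∈ Z := ⟨⟨not_lt.1 fun hlt => hgδ ⟨ht₀.1, hlt⟩ hgt₀, ht₀.2⟩, hgt₀⟩
  -- `t₁` is the first zero of `g` after `a`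
  have ht₁ : sInf Z ∈ Z := hZ.csInf_mem ⟨t₀, ht₀Z⟩ hZbdd
  set t₁ := sInf Z
  have ht₁' : t₁ ∈ Ioc a b := ⟨hδ.trans_le ht₁.1.1, ht₁.1.2⟩
  have hbefore : ∀ t ∈ Ioo a t₁, g t ≠ 0 := fun t ht hgt => by
    rcases lt_or_ge t δ with htδ | htδ
    · exact hgδ ⟨ht.1, htδ⟩ hgt
    · exact (csInf_le hZbdd ⟨⟨htδ, ht.2.le.trans ht₁.1.2⟩, hgt⟩).not_gt ht.2
  have hsub : Ioo a t₁ ⊆ Ioc a b := fun t ht => ⟨ht.1, ht.2.le.trans ht₁'.2⟩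
  have hle₁ : h t₁ ≤ g t₁ :=
    ContinuousWithinAt.closure_le (by rw [closure_Ioo ht₁'.1.ne]; exact right_mem_Icc.2 ht₁'.1.le)
      ((hh t₁ ht₁').mono hsub) ((hg t₁ ht₁').mono hsub) fun τ hτ =>
        hle τ (hsub hτ) fun t ht => hbefore t ⟨ht.1, ht.2.trans_lt hτ.2⟩
  linarith [hpos t₁ ht₁', show g t₁ = 0 from ht₁.2]

section NormOfCurve

variable {E : Type*} [NormedAddCommGroup E] [InnerProductSpace ℝ E]

theorem HasDerivAt.norm {v : ℝ → E} {w : E} {t : ℝ} (hv : HasDerivAt v w t) (h0 : v t ≠ 0) :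
    HasDerivAt (fun s => ‖v s‖) (⟪v t, w⟫ / ‖v t‖) t := by
  have h := hv.norm_sq.sqrt (by positivity)
  simp only [Real.sqrt_sq (norm_nonneg _)] at h
  exact h.congr_deriv (by field_simp)

theorem exists_hasDerivAt_inner_div_norm_ge {v w : ℝ → E} {z : E} {t : ℝ}
    (hv : HasDerivAt v (w t) t) (hw : HasDerivAt w z t) (h0 : v t ≠ 0) :
    ∃ D, HasDerivAt (fun s => ⟪v s, w s⟫ / ‖v s‖) D t ∧ ⟪v t, z⟫ / ‖v t‖ ≤ D := by
  have hpos : 0 < ‖v t‖ := norm_pos_iff.2 h0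
  refine ⟨_, (hv.inner ℝ hw).div (hv.norm h0) hpos.ne', ?_⟩
  have hcs : ⟪v t, w t⟫ ^ 2 ≤ ‖v t‖ ^ 2 * ‖w t‖ ^ 2 := by
    rw [← mul_pow, ← sq_abs]
    exact pow_le_pow_left₀ (abs_nonneg _) (abs_real_inner_le_norm _ _) 2
  rw [← sub_nonneg]
  refine (div_nonneg (sub_nonneg.2 hcs) (pow_nonneg hpos.le 3)).trans_eq ?_
  rw [real_inner_self_eq_norm_sq]
  field_simp
  ring

/-- The Wronskian `g' f - g f'` of `g = ‖v‖` and `f`, for `w = v'`. -/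
noncomputable def normWronskian (v w : ℝ → E) (f f' : ℝ → ℝ) (t : ℝ) : ℝ :=
  ⟪v t, w t⟫ / ‖v t‖ * f t - ‖v t‖ * f' t

theorem le_norm_div_of_jacobi {v w z : ℝ → E} {f f' Δ : ℝ → ℝ} {a b c : ℝ}
    (hv : ∀ t ∈ Ioc a b, HasDerivAt v (w t) t) (hw : ∀ t ∈ Ioc a b, HasDerivAt w (z t) t)
    (hz : ∀ t ∈ Ioc a b, -(Δ t * ‖v t‖ ^ 2) ≤ ⟪v t, z t⟫)
    (hf : ∀ t ∈ Ioc a b, HasDerivAt f (f' t) t)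
    (hf' : ∀ t ∈ Ioc a b, HasDerivAt f' (-(Δ t * f t)) t)
    (hfpos : ∀ t ∈ Ioc a b, 0 < f t) (hv0 : ∀ t ∈ Ioc a b, v t ≠ 0)
    (hW : Tendsto (normWronskian v w f f') (𝓝[>] a) (𝓝 0))
    (hq : Tendsto (fun t => ‖v t‖ / f t) (𝓝[>] a) (𝓝 c)) :
    ∀ t ∈ Ioc a b, c ≤ ‖v t‖ / f t := by
  refine le_div_of_sturm_comparison (fun t ht => (hv t ht).norm (hv0 t ht)) (fun t ht => ?_)
    hf hf' hfpos hW hq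
  obtain ⟨D, hD, hzD⟩ := exists_hasDerivAt_inner_div_norm_ge (hv t ht) (hw t ht) (hv0 t ht)
  refine ⟨D, hD, le_trans ?_ hzD⟩
  rw [le_div_iff₀ (norm_pos_iff.2 (hv0 t ht))]
  linarith [hz t ht]

theorem tendsto_normWronskian {v w : ℝ → E} {f f' : ℝ → ℝ} {a : ℝ} (hv : ContinuousAt v a)
    (hw : ContinuousAt w a) (hf : ContinuousAt f a) (hf' : ContinuousAt f' a)
    (h₁ : w a = 0 ∨ f a = 0) (h₂ : v a = 0 ∨ f' a = 0) :
    Tendsto (normWronskian v w f f') (𝓝 a) (𝓝 0) := by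
  have hA : Tendsto (fun t => ⟪v t, w t⟫ / ‖v t‖ * f t) (𝓝 a) (𝓝 0) := by
    refine squeeze_zero_norm (fun t => ?_) (a := fun t => ‖w t‖ * ‖f t‖) ?_
    · rw [norm_mul, Real.norm_eq_abs, abs_div, abs_norm]
      gcongr
      exact div_le_of_le_mul₀ (norm_nonneg _) (norm_nonneg _)
        ((abs_real_inner_le_norm _ _).trans_eq (mul_comm _ _))
    · rcases h₁ with h | h <;> simpa [h] using hw.tendsto.norm.mul hf.tendsto.norm
  have hB : Tendsto (fun t => ‖v t‖ * f' t) (𝓝 a) (𝓝 0) := by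
    rcases h₂ with h | h <;> simpa [h] using hv.tendsto.norm.mul hf'.tendsto
  have hW := hA.sub hB
  rwa [sub_zero] at hW

theorem tendsto_norm_div_of_hasDerivAt {v : ℝ → E} {u : E} {f : ℝ → ℝ} {a : ℝ}
    (hv : HasDerivAt v u a) (hv0 : v a = 0) (hf : HasDerivAt f 1 a) (hf0 : f a = 0) :
    Tendsto (fun t => ‖v t‖ / f t) (𝓝[>] a) (𝓝 ‖u‖) := by
  have h := ((hasDerivAt_iff_tendsto_slope.1 hv).norm.div (hasDerivAt_iff_tendsto_slope.1 hf)
    one_ne_zero).mono_left (nhdsGT_le_nhdsNE a)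
  rw [div_one] at h
  refine h.congr' (eventually_nhdsWithin_of_forall fun t (ht : a < t) => ?_)
  have ht' : t - a ≠ 0 := (sub_pos.2 ht).ne'
  simp only [Pi.div_apply, slope_def_module, hv0, hf0, sub_zero, norm_smul, smul_eq_mul,
    norm_inv, Real.norm_eq_abs, abs_of_pos (sub_pos.2 ht)]
  field_simp

theorem mul_le_norm_of_jacobi {v w z : ℝ → E} {f f' Δ : ℝ → ℝ} {a b c : ℝ}
    (hv : ∀ t ∈ Ioc a b, HasDerivAt v (w t) t) (hw : ∀ t ∈ Ioc a b, HasDerivAt w (z t) t)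
    (hz : ∀ t ∈ Ioc a b, -(Δ t * ‖v t‖ ^ 2) ≤ ⟪v t, z t⟫)
    (hf : ∀ t ∈ Ioc a b, HasDerivAt f (f' t) t)
    (hf' : ∀ t ∈ Ioc a b, HasDerivAt f' (-(Δ t * f t)) t)
    (hfpos : ∀ t ∈ Ioc a b, 0 < f t) (hc : 0 < c)
    (hW : Tendsto (normWronskian v w f f') (𝓝[>] a) (𝓝 0))
    (hq : Tendsto (fun t => ‖v t‖ / f t) (𝓝[>] a) (𝓝 c)) :
    ∀ t ∈ Ioc a b, c * f t ≤ ‖v t‖ := by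
  have hv0 : ∀ t ∈ Ioc a b, ‖v t‖ ≠ 0 := by
    refine forall_ne_zero_of_le_while_ne_zero (h := fun t => c * f t)
      (fun t ht => (hv t ht).continuousAt.norm.continuousWithinAt)
      (fun t ht => ((hf t ht).continuousAt.const_mul c).continuousWithinAt)
      (fun t ht => mul_pos hc (hfpos t ht))
      ((hq.eventually (eventually_gt_nhds hc)).mono fun t ht h0 => by simp [h0] at ht)
      fun τ hτ hτ0 => ?_
    have hsub : Ioc a τ ⊆ Ioc a b := Ioc_subset_Ioc_right hτ.2
    exact (le_div_iff₀ (hfpos τ hτ)).1 <| le_norm_div_of_jacobi (fun t ht => hv t (hsub ht))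
      (fun t ht => hw t (hsub ht)) (fun t ht => hz t (hsub ht)) (fun t ht => hf t (hsub ht))
      (fun t ht => hf' t (hsub ht)) (fun t ht => hfpos t (hsub ht))
      (fun t ht => norm_ne_zero_iff.1 (hτ0 t ht)) hW hq τ ⟨hτ.1, le_rfl⟩
  exact fun t ht => (le_div_iff₀ (hfpos t ht)).1 <| le_norm_div_of_jacobi hv hw hz hf hf' hfpos
    (fun t ht => norm_ne_zero_iff.1 (hv0 t ht)) hW hq t ht

end NormOfCurve

theorem jacobiFlow_norm_ge_comparison_general
    {E : Type*} [NormedAddCommGroup E] [InnerProductSpace ℝ E]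
    (R : ℝ → E →L[ℝ] E)
    (Δ : ℝ → ℝ)
    (hbound : ∀ s (u : E), ⟪R s u, u⟫ ≤ Δ s * ‖u‖ ^ 2)
    (T T' : ℝ → E →L[ℝ] E)
    (hT : ∀ t, HasDerivAt T (T' t) t)
    (hT' : ∀ t, HasDerivAt T' (-((R t).comp (T t))) t)
    (f f' : ℝ → ℝ)
    (hf : ∀ s, HasDerivAt f (f' s) s)
    (hf' : ∀ s, HasDerivAt f' (-(Δ s * f s)) s)
    (hinit : (T 0 = 0 ∧ T' 0 = ContinuousLinearMap.id ℝ E ∧ f 0 = 0 ∧ f' 0 = 1) ∨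
      (T 0 = ContinuousLinearMap.id ℝ E ∧ T' 0 = 0 ∧ f 0 = 1 ∧ f' 0 = 0))
    (s : ℝ) (hs : 0 ≤ s)
    (hfc : ∀ t ∈ Set.Ioc (0 : ℝ) s, 0 < f t) :
    ∀ u : E, f s * ‖u‖ ≤ ‖T s u‖ := by
  intro u
  rcases eq_or_ne u 0 with rfl | hu
  · simp
  rcases hs.eq_or_lt with rfl | hs
  · rcases hinit with ⟨hT0, -, hf0, -⟩ | ⟨hT0, -, hf0, -⟩ <;> simp [hT0, hf0]
  have hv (t : ℝ) : HasDerivAt (fun t => T t u) (T' t u) t := by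
    simpa using (hT t).clm_apply (hasDerivAt_const t u)
  have hw (t : ℝ) : HasDerivAt (fun t => T' t u) (-(R t (T t u))) t := by
    simpa using (hT' t).clm_apply (hasDerivAt_const t u)
  have hz (t : ℝ) : -(Δ t * ‖T t u‖ ^ 2) ≤ ⟪T t u, -(R t (T t u))⟫ := by
    rw [inner_neg_right, real_inner_comm]
    linarith [hbound t (T t u)]
  obtain ⟨hW, hq⟩ : Tendsto (normWronskian (fun t => T t u) (fun t => T' t u) f f') (𝓝 0) (𝓝 0) ∧
      Tendsto (fun t => ‖T t u‖ / f t) (𝓝[>] 0) (𝓝 ‖u‖) := by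
    have hW := tendsto_normWronskian (hv 0).continuousAt (hw 0).continuousAt
      (hf 0).continuousAt (hf' 0).continuousAt (f := f) (f' := f')
    rcases hinit with ⟨hT0, hT'0, hf0, hf'0⟩ | ⟨hT0, hT'0, hf0, hf'0⟩
    · exact ⟨hW (.inr hf0) (.inl (by simp [hT0])), tendsto_norm_div_of_hasDerivAt
        (by simpa [hT'0] using hv 0) (by simp [hT0]) (hf'0 ▸ hf 0) hf0⟩
    · refine ⟨hW (.inl (by simp [hT'0])) (.inr hf'0), ?_⟩
      have hq := (hv 0).continuousAt.tendsto.norm.div (hf 0).continuousAt.tendsto (by simp [hf0])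
      rw [hT0, hf0, ContinuousLinearMap.id_apply, div_one] at hq
      exact hq.mono_left nhdsWithin_le_nhds
  rw [mul_comm]
  exact mul_le_norm_of_jacobi (fun t _ => hv t) (fun t _ => hw t) (fun t _ => hz t)
    (fun t _ => hf t) (fun t _ => hf' t) hfc (norm_pos_iff.2 hu) (hW.mono_left nhdsWithin_le_nhds)
    hq s ⟨hs, le_rfl⟩

/-- Lower comparison estimate for the Jacobi flow. Let `T` be the Jacobi flow along a
unit-speed geodesic `c` (in the parallel trivialization, with symmetric pulled-back
curvature operator `R`), and suppose `⟨R s u, u⟩ ≤ Δ(s) ‖u‖²`. Let `f = f_Δ` solve the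
scalar comparison equation `f'' + Δ f = 0` with initial conditions matching those of `T`:
either `T 0 = 0`, `T' 0 = id`, `f 0 = 0`, `f' 0 = 1` (conjugate-point case) or
`T 0 = id`, `T' 0 = 0`, `f 0 = 1`, `f' 0 = 0` (focal case with `A = 0`). Then
`‖T s u‖ ≥ f_Δ(s) ‖u‖` for all `s ≥ 0` on which `f_Δ` stays positive. -/
theorem jacobiFlow_norm_ge_comparison
    {E : Type*} [NormedAddCommGroup E] [InnerProductSpace ℝ E]
    (R : ℝ → E →L[ℝ] E)
    (hRsymm : ∀ t (u v : E), ⟪R t u, v⟫ = ⟪u, R t v⟫)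
    (Δ : ℝ → ℝ)
    (hbound : ∀ s (u : E), ⟪R s u, u⟫ ≤ Δ s * ‖u‖ ^ 2)
    (T T' : ℝ → E →L[ℝ] E)
    (hT : ∀ t, HasDerivAt T (T' t) t)
    (hT' : ∀ t, HasDerivAt T' (-((R t).comp (T t))) t)
    (f f' : ℝ → ℝ)
    (hf : ∀ s, HasDerivAt f (f' s) s)
    (hf' : ∀ s, HasDerivAt f' (-(Δ s * f s)) s)
    (hinit : (T 0 = 0 ∧ T' 0 = ContinuousLinearMap.id ℝ E ∧ f 0 = 0 ∧ f' 0 = 1) ∨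
      (T 0 = ContinuousLinearMap.id ℝ E ∧ T' 0 = 0 ∧ f 0 = 1 ∧ f' 0 = 0))
    (s : ℝ) (hs : 0 ≤ s)
    (hfc : ∀ t ∈ Set.Ioc (0 : ℝ) s, 0 < f t) :
    ∀ u : E, f s * ‖u‖ ≤ ‖T s u‖ :=
  jacobiFlow_norm_ge_comparison_general R Δ hbound T T' hT hT' f f' hf hf' hinit s hs hfc
end

section
/- In the Hilbert manifold M = {x ∈ ℓ² : x₁² + x₂² + Σ_{i≥3} (1 − 1/i)² x_i² = 1}, along the geodesic γ(s) = sin(s)e₁ + cos(s)e₂ and with N the geodesic submanifold determined by γ'(0), the points γ(s_k) with s_k = kπ/(2(k−1)) are monofocal, s_k → π/2, and γ(π/2) is epifocal but not monofocal (a pathological point); in particular monofocal points may accumulate at an epifocal point that is not monofocal. -/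
/-!
At `s = π/2` every coefficient `cos ((1 - 1/n) π/2) = sin (π/(2n))` of the diagonal operator
is positive, so the operator is injective; but the coefficients tend to zero fast enough to form
an `ℓ²` sequence, and its only preimage would be the constant sequence `1`, which is not in `ℓ²`.
At `s_k` the `k`-th coefficient vanishes, because `(1 - 1/(k+3)) s_k = π/2`.
-/

open scoped ENNReal

open Real Filter Topology

theorem not_memℓp_const {ι 𝕜 : Type*} [Infinite ι] [NormedAddCommGroup 𝕜] {p : ℝ≥0∞}
    (hp : p ≠ ∞) {a : 𝕜} (ha : a ≠ 0) : ¬ Memℓp (fun _ : ι => a) p := by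
  intro h
  rcases eq_or_ne p 0 with rfl | hp0
  · exact Set.infinite_univ (by simpa [ha] using h.finite_dsupport)
  · have hpos : 0 < p.toReal := ENNReal.toReal_pos hp0 hp
    have hzero := (summable_const_iff _).1 (h.summable hpos)
    exact ha (norm_eq_zero.1 ((Real.rpow_eq_zero (norm_nonneg _) hpos.ne').1 hzero))

section DiagonalOperator

variable {ι 𝕜 : Type*} [NormedField 𝕜] {p : ℝ≥0∞}
  {T : lp (fun _ : ι => 𝕜) p → lp (fun _ : ι => 𝕜) p} {c : ι → 𝕜}

theorem not_injective_of_diagonal_eq_zero [DecidableEq ι] (hT : ∀ f i, T f i = c i * f i)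
    {i : ι} (hc : c i = 0) : ¬ Function.Injective T := by
  intro hinj
  have hsingle : T (lp.single p i 1) = T 0 := by
    ext j
    rw [hT, hT]
    by_cases hj : j = i
    · subst hj; simp [hc]
    · simp [hj]
  simpa using congrArg (fun f : lp (fun _ : ι => 𝕜) p => f i) (hinj hsingle)

theorem injective_of_diagonal_ne_zero (hT : ∀ f i, T f i = c i * f i) (hc : ∀ i, c i ≠ 0) :
    Function.Injective T := by
  intro f g hfg
  ext i
  have hi := congrArg (fun h : lp (fun _ : ι => 𝕜) p => h i) hfg
  simp only [hT] at hi
  exact mul_left_cancel₀ (hc i) hi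

theorem not_surjective_of_diagonal_memℓp [Infinite ι] (hp : p ≠ ∞)
    (hT : ∀ f i, T f i = c i * f i) (hc : ∀ i, c i ≠ 0) (hcp : Memℓp c p) :
    ¬ Function.Surjective T := by
  intro hsurj
  obtain ⟨f, hf⟩ := hsurj ⟨c, hcp⟩
  have hone : (f : ι → 𝕜) = fun _ => 1 := by
    funext i
    have hi := congrArg (fun h : lp (fun _ : ι => 𝕜) p => h i) hf
    simp only [hT] at hi
    exact mul_left_cancel₀ (hc i) (hi.trans (mul_one _).symm)
  exact not_memℓp_const hp one_ne_zero (hone ▸ f.2)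

end DiagonalOperator

noncomputable def focalTime (k : ℕ) : ℝ :=
  ((k : ℝ) + 3) * π / (2 * ((k : ℝ) + 2))

noncomputable def focalCoeff (s : ℝ) (k : ℕ) : ℝ :=
  cos (√((1 - 1 / ((k : ℝ) + 3)) ^ 2) * s)

theorem focalCoeff_eq_cos (s : ℝ) (k : ℕ) :
    focalCoeff s k = cos ((1 - 1 / ((k : ℝ) + 3)) * s) := by
  have h : 1 / ((k : ℝ) + 3) ≤ 1 := by
    rw [div_le_one (by positivity)]; linarith [k.cast_nonneg (α := ℝ)]
  rw [focalCoeff, Real.sqrt_sq (by linarith)]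

theorem focalCoeff_focalTime (k : ℕ) : focalCoeff (focalTime k) k = 0 := by
  have h : (1 - 1 / ((k : ℝ) + 3)) * (((k : ℝ) + 3) * π / (2 * ((k : ℝ) + 2))) = π / 2 := by
    field_simp; ring
  rw [focalCoeff_eq_cos, focalTime, h, cos_pi_div_two]

theorem focalCoeff_pi_div_two (k : ℕ) :
    focalCoeff (π / 2) k = sin (π / (2 * ((k : ℝ) + 3))) := by
  have h : (1 - 1 / ((k : ℝ) + 3)) * (π / 2) = π / 2 - π / (2 * ((k : ℝ) + 3)) := by
    field_simp
  rw [focalCoeff_eq_cos, h, cos_pi_div_two_sub]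

theorem focalCoeff_pi_div_two_pos (k : ℕ) : 0 < focalCoeff (π / 2) k := by
  rw [focalCoeff_pi_div_two]
  apply sin_pos_of_pos_of_lt_pi (by positivity)
  rw [div_lt_iff₀ (by positivity)]
  nlinarith [pi_pos, k.cast_nonneg (α := ℝ)]

theorem memℓp_focalCoeff_pi_div_two : Memℓp (focalCoeff (π / 2)) 2 := by
  have hinv : Memℓp (fun k : ℕ => 1 / ((k : ℝ) + 3)) 2 := by
    apply memℓp_gen
    have hsum := (Real.summable_one_div_nat_add_rpow 3 2).2 one_lt_two
    refine hsum.congr fun k => ?_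
    simp [abs_of_pos (show (0 : ℝ) < k + 3 by positivity)]
  refine (hinv.const_mul (π / 2)).mono fun k => ?_
  rw [norm_of_nonneg (focalCoeff_pi_div_two_pos k).le, focalCoeff_pi_div_two]
  calc sin (π / (2 * ((k : ℝ) + 3))) ≤ π / (2 * ((k : ℝ) + 3)) := sin_le (by positivity)
    _ = π / 2 * (1 / ((k : ℝ) + 3)) := by field_simp

theorem tendsto_focalTime_atTop : Tendsto focalTime atTop (𝓝 (π / 2)) := by
  have h : focalTime = fun k : ℕ => π / 2 + π / 2 * ((k : ℝ) + 2)⁻¹ := by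
    funext k; rw [focalTime]; field_simp; ring
  rw [h]
  have hinv : Tendsto (fun k : ℕ => ((k : ℝ) + 2)⁻¹) atTop (𝓝 0) :=
    (tendsto_atTop_add_const_right _ 2 tendsto_natCast_atTop_atTop).inv_tendsto_atTop
  simpa using (hinv.const_mul (π / 2)).const_add (π / 2)

/-- The pathological example on the ellipsoid
`M = {x ∈ ℓ² : x₁² + x₂² + Σ_{i≥3} aᵢ xᵢ² = 1}` with `a_k = (1 - 1/k)²`, along the geodesic
`γ(s) = sin(s)e₁ + cos(s)e₂`, with `N` the geodesic submanifold determined by `γ'(0)`.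
Reindexing the normal coordinates by `k ↦ k + 3`, the differential of the normal
exponential map is the diagonal operator `D s : (b_k) ↦ (b_k cos(√a_{k+3} s))`.
Then the points `γ(s_k)`, `s_k = (k+3)π/(2(k+2))`, are monofocal (`D (s_k)` not injective),
`s_k → π/2`, and `γ(π/2)` is epifocal (`D (π/2)` not surjective) but not monofocal
(`D (π/2)` injective): monofocal points accumulate at a pathological point. -/
theorem ellipsoid_pathological_point
    (D : ℝ → (lp (fun _ : ℕ => ℝ) 2 →L[ℝ] lp (fun _ : ℕ => ℝ) 2))
    (hD : ∀ (s : ℝ) (f : lp (fun _ : ℕ => ℝ) 2) (k : ℕ),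
      (D s f : ∀ _ : ℕ, ℝ) k =
        Real.cos (Real.sqrt ((1 - 1 / ((k : ℝ) + 3)) ^ 2) * s) * (f : ∀ _ : ℕ, ℝ) k) :
    (∀ k : ℕ, ¬ Function.Injective
        (D (((k : ℝ) + 3) * Real.pi / (2 * ((k : ℝ) + 2))))) ∧
    Filter.Tendsto (fun k : ℕ => ((k : ℝ) + 3) * Real.pi / (2 * ((k : ℝ) + 2)))
      Filter.atTop (nhds (Real.pi / 2)) ∧
    Function.Injective (D (Real.pi / 2)) ∧
    ¬ Function.Surjective (D (Real.pi / 2)) := by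
  have hdiag (s : ℝ) : ∀ f k, D s f k = focalCoeff s k * f k := hD s
  have hne (k : ℕ) : focalCoeff (π / 2) k ≠ 0 := (focalCoeff_pi_div_two_pos k).ne'
  exact ⟨fun k => not_injective_of_diagonal_eq_zero (hdiag _) (focalCoeff_focalTime k),
    tendsto_focalTime_atTop,
    injective_of_diagonal_ne_zero (hdiag _) hne,
    not_surjective_of_diagonal_memℓp ENNReal.ofNat_ne_top (hdiag _) hne
      memℓp_focalCoeff_pi_div_two⟩
end
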